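/- arXiv:2509.07433 — 2 statements merged into one kernel-verified Lean document; each statement's English description precedes it below -/
import Mathlib

section
/- For all real α, β, all A, B ≥ 0 and all p > 1, one has |β−α|^{p−2}(β−α)(β B^p − α A^p) ≥ −c_p (|α|+|β|)^p |B−A|^p, where c_p = (1/2)(p−1)^{p−1}. -/
/-!
Both sides are invariant under `(α, A) ↔ (β, B)` and under `(α, β, A, B) ↦ (-β, -α, B, A)`, so
one may assume `α ≤ β` and `0 ≤ α + β`. With `t = β - α`,
`2 (α A^p - β B^p) = (α + β)(A^p - B^p) - t (A^p + B^p)`, and the tangent line of `x ↦ x^p` at `A`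
gives `A^p - B^p ≤ p A^(p-1) |A - B|`. Hence `2 t^(p-1) (α A^p - β B^p) ≤ p c u^(p-1) - u^p` with
`u = t A`, `c = (α + β) |A - B|`, and Young's inequality bounds the right side by
`(p - 1)^(p-1) c^p`.
-/

namespace Real

theorem rpow_add_mul_rpow_sub_one_mul_sub_le {p x y : ℝ} (hp : 1 ≤ p) (hx : 0 ≤ x) (hy : 0 ≤ y) :
    x ^ p + p * x ^ (p - 1) * (y - x) ≤ y ^ p := by
  rcases hx.eq_or_lt with rfl | hx
  · rcases hp.eq_or_lt with rfl | hp
    · simp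
    · simpa [zero_rpow (by linarith : p ≠ 0), zero_rpow (by linarith : p - 1 ≠ 0)] using
        rpow_nonneg hy p
  have hbern := one_add_mul_self_le_rpow_one_add (s := y / x - 1)
    (by linarith [div_nonneg hy hx.le]) hp
  rw [add_sub_cancel, div_rpow hy hx.le, le_div_iff₀ (rpow_pos_of_pos hx p)] at hbern
  calc x ^ p + p * x ^ (p - 1) * (y - x)
      = (1 + p * (y / x - 1)) * x ^ p := by
        rw [rpow_sub_one hx.ne']; field_simp
    _ ≤ y ^ p := hbern

theorem mul_mul_rpow_sub_one_le_rpow_add {p c u : ℝ} (hp : 1 < p) (hc : 0 ≤ c) (hu : 0 ≤ u) :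
    p * c * u ^ (p - 1) ≤ u ^ p + (p - 1) ^ (p - 1) * c ^ p := by
  have hp₁ : 0 < p - 1 := by linarith
  have hyoung := young_inequality_of_nonneg (mul_nonneg hp₁.le hc) (rpow_nonneg hu (p - 1))
    (HolderConjugate.conjExponent hp)
  have hconj : (p - 1) * conjExponent p = p := by
    rw [conjExponent]; field_simp
  have hpow : (p - 1) ^ p = (p - 1) ^ (p - 1) * (p - 1) := by
    rw [← rpow_add_one hp₁.ne', sub_add_cancel]
  rw [← rpow_mul hu, hconj, mul_rpow hp₁.le hc, conjExponent, div_div_eq_mul_div, hpow,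
    ← add_div, le_div_iff₀ (by linarith)] at hyoung
  exact le_of_mul_le_mul_left (by linarith) hp₁

end Real

open Real

variable {α β A B p : ℝ}

theorem abs_rpow_sub_two_mul_self {τ : ℝ} (hτ : 0 ≤ τ) (hp : p ≠ 1) :
    |τ| ^ (p - 2) * τ = τ ^ (p - 1) := by
  rw [abs_of_nonneg hτ, ← rpow_add_one' hτ (by contrapose! hp; linarith)]
  ring_nf

theorem rpow_sub_one_mul_sub_le_of_nonneg_add (hαβ : α ≤ β) (hsum : 0 ≤ α + β) (hA : 0 ≤ A)
    (hB : 0 ≤ B) (hp : 1 < p) :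
    (β - α) ^ (p - 1) * (α * A ^ p - β * B ^ p)
      ≤ 1 / 2 * (p - 1) ^ (p - 1) * (α + β) ^ p * |A - B| ^ p := by
  set t := β - α
  have ht : 0 ≤ t := sub_nonneg.2 hαβ
  have hdiff : A ^ p - B ^ p ≤ p * A ^ (p - 1) * |A - B| :=
    calc A ^ p - B ^ p ≤ p * A ^ (p - 1) * (A - B) := by
          linarith [rpow_add_mul_rpow_sub_one_mul_sub_le hp.le hA hB]
      _ ≤ p * A ^ (p - 1) * |A - B| := by
          gcongr
          exact le_abs_self _
  have htwice : 2 * (α * A ^ p - β * B ^ p) ≤ (α + β) * (p * A ^ (p - 1) * |A - B|) - t * A ^ p :=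
    calc 2 * (α * A ^ p - β * B ^ p) = (α + β) * (A ^ p - B ^ p) - t * A ^ p - t * B ^ p := by
          ring
      _ ≤ (α + β) * (p * A ^ (p - 1) * |A - B|) - t * A ^ p := by
          linarith [mul_le_mul_of_nonneg_left hdiff hsum, mul_nonneg ht (rpow_nonneg hB p)]
  have hlegendre := mul_mul_rpow_sub_one_le_rpow_add hp (mul_nonneg hsum (abs_nonneg (A - B)))
    (mul_nonneg ht hA)
  rw [mul_rpow ht hA, mul_rpow ht hA, mul_rpow hsum (abs_nonneg _)] at hlegendre
  have htp : t ^ p = t ^ (p - 1) * t := by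
    rw [← rpow_add_one' ht (by linarith), sub_add_cancel]
  rw [htp] at hlegendre
  linarith [mul_le_mul_of_nonneg_left htwice (rpow_nonneg ht (p - 1))]

theorem rpow_sub_one_mul_sub_le_of_le (hαβ : α ≤ β) (hA : 0 ≤ A) (hB : 0 ≤ B) (hp : 1 < p) :
    (β - α) ^ (p - 1) * (α * A ^ p - β * B ^ p)
      ≤ 1 / 2 * (p - 1) ^ (p - 1) * (|α| + |β|) ^ p * |A - B| ^ p := by
  rcases le_total 0 (α + β) with hsum | hsum
  · calc _ ≤ 1 / 2 * (p - 1) ^ (p - 1) * (α + β) ^ p * |A - B| ^ p :=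
          rpow_sub_one_mul_sub_le_of_nonneg_add hαβ hsum hA hB hp
      _ ≤ _ := by
          gcongr <;> exact le_abs_self _
  · have h := rpow_sub_one_mul_sub_le_of_nonneg_add (α := -β) (β := -α) (A := B) (B := A)
      (neg_le_neg hαβ) (by linarith) hB hA hp
    rw [neg_sub_neg, abs_sub_comm B A, add_comm (-β)] at h
    calc _ = (β - α) ^ (p - 1) * (-β * B ^ p - -α * A ^ p) := by ring
      _ ≤ 1 / 2 * (p - 1) ^ (p - 1) * (-α + -β) ^ p * |A - B| ^ p := h
      _ ≤ _ := by
          gcongr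
          · linarith
          all_goals exact neg_le_abs _

theorem stmt_1 (α β A B p : ℝ) (hA : 0 ≤ A) (hB : 0 ≤ B) (hp : 1 < p) :
    |β - α| ^ (p - 2) * (β - α) * (β * B ^ p - α * A ^ p)
      ≥ -((1/2) * (p - 1) ^ (p - 1) * (|α| + |β|) ^ p * |B - A| ^ p) := by
  rcases le_total α β with h | h
  · have key := rpow_sub_one_mul_sub_le_of_le h hA hB hp
    rw [abs_rpow_sub_two_mul_self (sub_nonneg.2 h) hp.ne', abs_sub_comm B A]
    linarith
  · have key := rpow_sub_one_mul_sub_le_of_le h hB hA hp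
    rw [← neg_sub α β, abs_neg, mul_neg, abs_rpow_sub_two_mul_self (sub_nonneg.2 h) hp.ne']
    rw [add_comm |β|] at key
    linarith
end

section
/- For all real α ≤ β, all A, B ≥ 0 and all p > 1, one has (β−α)^{p−1}(β B^p − α A^p) ≥ (1/4)(β−α)^p (A^p + B^p) − d_p (|α|+|β|)^p |B−A|^p, where d_p = (1/2)[2(p−1)]^{p−1}. -/
/-!
With `δ = β - α`, one has the exact splitting
`δ ^ (p - 1) (β B ^ p - α A ^ p) = ½ δ ^ p (A ^ p + B ^ p) + ½ δ ^ (p - 1) (α + β) (B ^ p - A ^ p)`.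
The mean value bound `|B ^ p - A ^ p| ≤ p C ^ (p - 1) |B - A|` with `C = max A B` controls the
second term by `½ p (δ C) ^ (p - 1) (|α| + |β|) |B - A|`, and Young's inequality with weight
`2 (p - 1)` splits this into `¼ (δ C) ^ p ≤ ¼ δ ^ p (A ^ p + B ^ p)` plus the error term
`d_p ((|α| + |β|) |B - A|) ^ p`.
-/

theorem Real.rpow_sub_rpow_le_mul_rpow_sub_one_mul {a b p : ℝ} (ha : 0 ≤ a) (hab : a ≤ b)
    (hp : 1 ≤ p) : b ^ p - a ^ p ≤ p * b ^ (p - 1) * (b - a) := by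
  rcases (ha.trans hab).eq_or_lt with rfl | hb
  · simp [le_antisymm hab ha]
  have hbern := one_add_mul_self_le_rpow_one_add (s := a / b - 1)
    (by linarith [div_nonneg ha hb.le]) hp
  rw [add_sub_cancel, Real.div_rpow ha hb.le, le_div_iff₀ (Real.rpow_pos_of_pos hb p)] at hbern
  rw [Real.rpow_sub_one hb.ne']
  have : p * (b ^ p / b) * (b - a) = p * (1 - a / b) * b ^ p := by field_simp
  nlinarith

theorem Real.abs_rpow_sub_rpow_le {a b p : ℝ} (ha : 0 ≤ a) (hb : 0 ≤ b) (hp : 1 ≤ p) :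
    |b ^ p - a ^ p| ≤ p * max a b ^ (p - 1) * |b - a| := by
  rcases le_total a b with h | h
  · rw [max_eq_right h, abs_of_nonneg (sub_nonneg.2 h),
      abs_of_nonneg (sub_nonneg.2 (Real.rpow_le_rpow ha h (by linarith)))]
    exact Real.rpow_sub_rpow_le_mul_rpow_sub_one_mul ha h hp
  · rw [max_eq_left h, abs_sub_comm, abs_sub_comm b, abs_of_nonneg (sub_nonneg.2 h),
      abs_of_nonneg (sub_nonneg.2 (Real.rpow_le_rpow hb h (by linarith)))]
    exact Real.rpow_sub_rpow_le_mul_rpow_sub_one_mul hb h hp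

theorem Real.mul_rpow_sub_one_mul_le {u v p t : ℝ} (hu : 0 ≤ u) (hv : 0 ≤ v) (hp : 1 < p)
    (ht : 0 < t) : p * (u ^ (p - 1) * v) ≤ (p - 1) / t * u ^ p + t ^ (p - 1) * v ^ p := by
  set lam := t ^ ((p - 1) / p)
  have hlam : 0 < lam := Real.rpow_pos_of_pos ht _
  have hp0 : 0 < p := by linarith
  have hp1 : 0 < p - 1 := by linarith
  have hy := Real.young_inequality_of_nonneg (a := u ^ (p - 1) / lam) (b := lam * v)
    (p := p / (p - 1)) (by positivity) (by positivity) (Real.HolderConjugate.conjExponent hp).symm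
  have e1 : u ^ (p - 1) / lam * (lam * v) = u ^ (p - 1) * v := by field_simp
  have e2 : (u ^ (p - 1) / lam) ^ (p / (p - 1)) = u ^ p / t := by
    rw [Real.div_rpow (Real.rpow_nonneg hu _) hlam.le, ← Real.rpow_mul hu,
      ← Real.rpow_mul ht.le,
      show (p - 1) * (p / (p - 1)) = p by field_simp,
      show (p - 1) / p * (p / (p - 1)) = 1 by field_simp, Real.rpow_one]
  have e3 : (lam * v) ^ p = t ^ (p - 1) * v ^ p := by
    rw [Real.mul_rpow hlam.le hv, ← Real.rpow_mul ht.le,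
      show (p - 1) / p * p = p - 1 by field_simp]
  rw [e1, e2, e3] at hy
  calc p * (u ^ (p - 1) * v) ≤ p * (u ^ p / t / (p / (p - 1)) + t ^ (p - 1) * v ^ p / p) :=
        mul_le_mul_of_nonneg_left hy hp0.le
    _ = (p - 1) / t * u ^ p + t ^ (p - 1) * v ^ p := by field_simp

theorem stmt_2 (α β A B p : ℝ) (hαβ : α ≤ β) (hA : 0 ≤ A) (hB : 0 ≤ B) (hp : 1 < p) :
    (β - α) ^ (p - 1) * (β * B ^ p - α * A ^ p)
      ≥ (1/4) * (β - α) ^ p * (A ^ p + B ^ p)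
        - (1/2) * (2 * (p - 1)) ^ (p - 1) * (|α| + |β|) ^ p * |B - A| ^ p := by
  set δ := β - α
  set M := |α| + |β|
  set C := max A B
  have hδ : 0 ≤ δ := sub_nonneg.2 hαβ
  have hM : 0 ≤ M := by positivity
  have hC : 0 ≤ C := le_max_of_le_left hA
  have hp1 : 0 < p - 1 := sub_pos.2 hp
  have hδp : δ ^ p = δ ^ (p - 1) * δ := by
    conv_lhs => rw [← sub_add_cancel p 1, Real.rpow_add' hδ (by linarith), Real.rpow_one]
  have hsplit : δ ^ (p - 1) * (β * B ^ p - α * A ^ p)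
      = 1/2 * δ ^ p * (A ^ p + B ^ p) + 1/2 * δ ^ (p - 1) * ((α + β) * (B ^ p - A ^ p)) := by
    rw [hδp]; ring
  have hcross : -((α + β) * (B ^ p - A ^ p)) ≤ p * C ^ (p - 1) * (M * |B - A|) := by
    calc _ ≤ |α + β| * |B ^ p - A ^ p| := by rw [← abs_mul]; exact neg_le_abs _
      _ ≤ M * (p * C ^ (p - 1) * |B - A|) :=
        mul_le_mul (abs_add_le α β) (Real.abs_rpow_sub_rpow_le hA hB hp.le) (abs_nonneg _) hM
      _ = _ := by ring
  have hyoung := Real.mul_rpow_sub_one_mul_le (mul_nonneg hδ hC)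
    (mul_nonneg hM (abs_nonneg (B - A))) hp (t := 2 * (p - 1)) (by positivity)
  rw [Real.mul_rpow hδ hC, Real.mul_rpow hδ hC, Real.mul_rpow hM (abs_nonneg _),
    show (p - 1) / (2 * (p - 1)) = 1 / 2 by field_simp] at hyoung
  have hCp : C ^ p ≤ A ^ p + B ^ p := by
    rcases le_total A B with h | h
    · simpa [C, h] using Real.rpow_nonneg hA p
    · simpa [C, h] using Real.rpow_nonneg hB p
  linarith [mul_le_mul_of_nonneg_left hcross (Real.rpow_nonneg hδ (p - 1)),
    mul_le_mul_of_nonneg_left hCp (Real.rpow_nonneg hδ p)]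
end
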